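/- arXiv:1608.05444 — 2 statements merged into one kernel-verified Lean document; each statement's English description precedes it below -/
import Mathlib

section
/- For any well-formed navigation history H and δ ≥ 1: if H traverses the history by +δ to H', then H' traverses the history by −δ to H. -/
structure NavData (α : Type) where
  D : Set α
  A : Set α
  child : α → α → Prop
  le : α → α → Prop
  sim : α → α → Prop

namespace NavData

variable {α : Type}

/-- All the navigation history axioms: finiteness, A ⊆ D, the child relation is a
forest on D, ≤ is a total order on D, ∼ is an equivalence on D, every document has a
unique active ∼-representative, same-session documents share parents, parents precede
children chronologically. -/
def IsNavHist (H : NavData α) : Prop :=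
  H.D.Finite ∧
  H.A ⊆ H.D ∧
  (∀ d e, H.child d e → d ∈ H.D ∧ e ∈ H.D) ∧
  (∀ d, ¬ Relation.TransGen H.child d d) ∧
  (∀ p q e, H.child p e → H.child q e → p = q) ∧
  (∀ d ∈ H.D, H.le d d) ∧
  (∀ d e f, H.le d e → H.le e f → H.le d f) ∧
  (∀ d e, H.le d e → H.le e d → d = e) ∧
  (∀ d e, H.le d e → d ∈ H.D ∧ e ∈ H.D) ∧
  (∀ d ∈ H.D, ∀ e ∈ H.D, H.le d e ∨ H.le e d) ∧
  (∀ d ∈ H.D, H.sim d d) ∧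
  (∀ d e, H.sim d e → H.sim e d) ∧
  (∀ d e f, H.sim d e → H.sim e f → H.sim d f) ∧
  (∀ d e, H.sim d e → d ∈ H.D ∧ e ∈ H.D) ∧
  (∀ d ∈ H.D, ∃! d', d' ∈ H.A ∧ H.sim d d') ∧
  (∀ d e e', H.child d e → H.sim e e' → H.child d e') ∧
  (∀ d e, H.child d e → H.le d e)

/-- Strict chronological order `d < e`. -/
def lt (H : NavData α) (d e : α) : Prop := H.le d e ∧ d ≠ e

/-- `d ≲ e` : same session and strictly earlier. -/
def before (H : NavData α) (d e : α) : Prop := H.sim d e ∧ H.lt d e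

/-- The joint session future: documents strictly later than some active same-session doc. -/
def JSF (H : NavData α) : Set α := { e | ∃ d ∈ H.A, H.before d e }

/-- Traversing the history to `d`: replace A by { e ∈ A | ¬(d ∼ e) } ∪ {d}. -/
def traverseTo (H : NavData α) (d : α) : NavData α :=
  { H with A := { e | (e ∈ H.A ∧ ¬ H.sim d e) ∨ e = d } }

def WellFormed (H : NavData α) : Prop :=
  ∀ a b c d, H.before a b → H.before c d → a ∈ H.A → d ∈ H.A → H.le d b

/-- The forward target: the ≤-least element of the joint session future. -/
def IsForwardTarget (H : NavData α) (f : α) : Prop :=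
  f ∈ H.JSF ∧ ∀ e ∈ H.JSF, H.le f e

def CanGoBack (H : NavData α) (d : α) : Prop := ∃ c, H.before c d

/-- The back target: the ≤-largest active document that can go back. -/
def IsBackTarget (H : NavData α) (b : α) : Prop :=
  b ∈ H.A ∧ H.CanGoBack b ∧ ∀ d ∈ H.A, H.CanGoBack d → H.le d b

/-- `d` is the ≤-largest document with `d ≲ d'`. -/
def IsBackStepTarget (H : NavData α) (d' d : α) : Prop :=
  H.before d d' ∧ ∀ e, H.before e d' → H.le e d

/-- Traversing the history from `d'`: traversing to the ≤-largest `d` with `d ≲ d'`. -/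
def TraverseFrom (H : NavData α) (d' : α) (H' : NavData α) : Prop :=
  ∃ d, H.IsBackStepTarget d' d ∧ H' = H.traverseTo d

/-- `ds` lists the first entries of the joint session future, in increasing order. -/
def FirstOfJSF (H : NavData α) (ds : List α) : Prop :=
  ds.Chain' H.lt ∧ (∀ d ∈ ds, d ∈ H.JSF) ∧
  ∀ e ∈ H.JSF, e ∉ ds → ∀ d ∈ ds, H.lt d e

/-- Patched traversal by +n: traverse successively to each of the first n entries of the
joint session future. -/
def TraverseByPlus (H : NavData α) (n : ℕ) (H' : NavData α) : Prop :=
  ∃ ds : List α, ds.length = n ∧ H.FirstOfJSF ds ∧ H' = ds.foldl traverseTo H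

/-- Patched traversal by −n: traverse successively from each successive back target. -/
inductive TraverseByMinus : NavData α → ℕ → NavData α → Prop
  | zero (H : NavData α) : TraverseByMinus H 0 H
  | succ {H H₁ H' : NavData α} {b : α} {n : ℕ} :
      H.IsBackTarget b → H.TraverseFrom b H₁ → TraverseByMinus H₁ n H' →
      TraverseByMinus H (n + 1) H'

/-- Traversal by an integer delta. -/
def TraverseBy (H : NavData α) (δ : ℤ) (H' : NavData α) : Prop :=
  if 0 ≤ δ then H.TraverseByPlus δ.toNat H' else TraverseByMinus H (-δ).toNat H'

/-- The active-child relation `d ↠ e`. -/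
def activeChild (H : NavData α) (d e : α) : Prop := H.child d e ∧ e ∈ H.A

def IsActiveRoot (H : NavData α) (d : α) : Prop :=
  d ∈ H.A ∧ ∀ e, ¬ H.child e d

/-- Fully active: reachable from an active root by active children. -/
def FullyActive (H : NavData α) (d : α) : Prop :=
  ∃ d₀, H.IsActiveRoot d₀ ∧ Relation.ReflTransGen H.activeChild d₀ d

/-- Restrict a navigation history away from a set `R` of documents. -/
def restrictAway (H : NavData α) (R : Set α) : NavData α where
  D := H.D \ R
  A := H.A \ R
  child e f := H.child e f ∧ e ∉ R ∧ f ∉ R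
  le e f := H.le e f ∧ e ∉ R ∧ f ∉ R
  sim e f := H.sim e f ∧ e ∉ R ∧ f ∉ R

/-- Deleting `d`: removing `d` together with all its →-descendants. -/
def deleteDoc (H : NavData α) (d : α) : NavData α :=
  H.restrictAway { e | Relation.ReflTransGen H.child d e }

/-- Replacing `d` by a fresh `d'`. -/
def replaceDoc (H : NavData α) (d d' : α) : NavData α where
  D := H.D ∪ {d'}
  A := (H.A \ {d}) ∪ {d'}
  child e f := H.child e f ∨ (H.child e d ∧ f = d')
  le e f := H.le e f ∨ ((e ∈ H.D ∨ e = d') ∧ f = d')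
  sim e f := H.sim e f ∨ (e = d' ∧ f = d') ∨ (H.sim e d ∧ f = d') ∨ (H.sim d f ∧ e = d')

/-- Deleting the entire joint session future (each member with its descendants). -/
def deleteJSF (H : NavData α) : NavData α :=
  H.restrictAway { e | ∃ j ∈ H.JSF, Relation.ReflTransGen H.child j e }

/-- Patched navigation from `d` to `d'`: delete the joint session future, then
replace `d` by `d'`. -/
def navigateFrom (H : NavData α) (d d' : α) : NavData α :=
  (H.deleteJSF).replaceDoc d d'

/-- Unpatched traversal by +n: traverse directly to the n-th entry of the joint
session future (a single traversal). -/
def UnpatchedTraverseByPlus (H : NavData α) (n : ℕ) (H' : NavData α) : Prop :=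
  ∃ ds : List α, H.FirstOfJSF ds ∧ ds.length = n ∧
    ∃ d, ds.getLast? = some d ∧ H' = H.traverseTo d

end NavData

/-!
The first entry `d` of the joint session future is its `≤`-least element, and its active
session-mate `a` is then the latest document strictly before `d` in its session: anything
later than `a` in that session lies in the joint session future, hence after `d`.
Traversing to `d` removes exactly `d` from the joint session future and keeps the history
well-formed, and by well-formedness `d` becomes the back target. Going back from `d` lands
on `a`, which restores the active set of `H`. Induction on the list of forward targets
then reverses a traversal by `+δ` with `δ` backward steps.
-/

namespace NavData

variable {α : Type} {H : NavData α} {a c d e : α}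

namespace IsNavHist

lemma le_refl (hH : H.IsNavHist) (hd : d ∈ H.D) : H.le d d := hH.2.2.2.2.2.1 d hd

lemma le_trans (hH : H.IsNavHist) (hcd : H.le c d) (hde : H.le d e) : H.le c e :=
  hH.2.2.2.2.2.2.1 c d e hcd hde

lemma le_antisymm (hH : H.IsNavHist) (hde : H.le d e) (hed : H.le e d) : d = e :=
  hH.2.2.2.2.2.2.2.1 d e hde hed

lemma le_total (hH : H.IsNavHist) (hd : d ∈ H.D) (he : e ∈ H.D) : H.le d e ∨ H.le e d :=
  hH.2.2.2.2.2.2.2.2.2.1 d hd e he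

lemma sim_refl (hH : H.IsNavHist) (hd : d ∈ H.D) : H.sim d d :=
  hH.2.2.2.2.2.2.2.2.2.2.1 d hd

lemma sim_symm (hH : H.IsNavHist) (h : H.sim d e) : H.sim e d :=
  hH.2.2.2.2.2.2.2.2.2.2.2.1 d e h

lemma sim_trans (hH : H.IsNavHist) (hcd : H.sim c d) (hde : H.sim d e) : H.sim c e :=
  hH.2.2.2.2.2.2.2.2.2.2.2.2.1 c d e hcd hde

lemma mem_D_of_sim (hH : H.IsNavHist) (h : H.sim d e) : d ∈ H.D ∧ e ∈ H.D :=
  hH.2.2.2.2.2.2.2.2.2.2.2.2.2.1 d e h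

lemma eq_of_sim_of_mem_A (hH : H.IsNavHist) (hd : d ∈ H.A) (he : e ∈ H.A)
    (h : H.sim d e) : d = e := by
  have hdD := (hH.mem_D_of_sim h).1
  exact (hH.2.2.2.2.2.2.2.2.2.2.2.2.2.2.1 d hdD).unique ⟨hd, hH.sim_refl hdD⟩ ⟨he, h⟩

lemma not_lt_of_le (hH : H.IsNavHist) (hde : H.le d e) : ¬ H.lt e d :=
  fun hed => hed.2 (hH.le_antisymm hed.1 hde)

lemma lt_trans (hH : H.IsNavHist) (hcd : H.lt c d) (hde : H.lt d e) : H.lt c e :=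
  ⟨hH.le_trans hcd.1 hde.1, fun hce => hH.not_lt_of_le (hce ▸ hde.1) hcd⟩

lemma before_trans (hH : H.IsNavHist) (hcd : H.before c d) (hde : H.before d e) :
    H.before c e :=
  ⟨hH.sim_trans hcd.1 hde.1, hH.lt_trans hcd.2 hde.2⟩

lemma mem_D_of_mem_JSF (hH : H.IsNavHist) (he : e ∈ H.JSF) : e ∈ H.D :=
  let ⟨_, _, hae⟩ := he
  (hH.mem_D_of_sim hae.1).2

end IsNavHist

@[simp]
lemma mem_traverseTo_A : e ∈ (H.traverseTo d).A ↔ (e ∈ H.A ∧ ¬ H.sim d e) ∨ e = d :=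
  Iff.rfl

@[simp]
lemma traverseTo_sim : (H.traverseTo d).sim = H.sim := rfl

lemma traverseTo_eq_self (hH : H.IsNavHist) (ha : a ∈ H.A) : H.traverseTo a = H := by
  suffices (H.traverseTo a).A = H.A by cases H; simpa [traverseTo] using this
  ext e
  simp only [mem_traverseTo_A]
  refine ⟨by rintro (⟨he, -⟩ | rfl) <;> assumption, fun he => ?_⟩
  by_cases hae : H.sim a e
  · exact .inr (hH.eq_of_sim_of_mem_A ha he hae).symm
  · exact .inl ⟨he, hae⟩

lemma traverseTo_traverseTo_of_sim (hH : H.IsNavHist) (hda : H.sim d a) :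
    (H.traverseTo d).traverseTo a = H.traverseTo a := by
  suffices ((H.traverseTo d).traverseTo a).A = (H.traverseTo a).A by
    cases H; simpa [traverseTo] using this
  ext e
  simp only [mem_traverseTo_A, traverseTo_sim]
  constructor
  · rintro (⟨⟨he, -⟩ | rfl, hae⟩ | rfl)
    exacts [.inl ⟨he, hae⟩, absurd (hH.sim_symm hda) hae, .inr rfl]
  · rintro (⟨he, hae⟩ | rfl)
    exacts [.inl ⟨.inl ⟨he, fun hde => hae (hH.sim_trans (hH.sim_symm hda) hde)⟩, hae⟩, .inr rfl]

lemma IsNavHist.traverseTo (hH : H.IsNavHist) (hd : d ∈ H.D) : (H.traverseTo d).IsNavHist := by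
  obtain ⟨hfin, hAD, hchD, hacyc, hpar, hrefl, htrans, hanti, hleD, htot,
    hsrefl, hssym, hstrans, hsD, huniq, hchs, hchle⟩ := hH
  refine ⟨hfin, ?_, hchD, hacyc, hpar, hrefl, htrans, hanti, hleD, htot,
    hsrefl, hssym, hstrans, hsD, fun x hx => ?_, hchs, hchle⟩
  · rintro x (⟨hx, -⟩ | rfl)
    exacts [hAD hx, hd]
  by_cases hdx : H.sim d x
  · refine ⟨d, ⟨.inr rfl, hssym d x hdx⟩, ?_⟩
    rintro y ⟨⟨hy, hdy⟩ | rfl, hxy⟩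
    exacts [absurd (hstrans d x y hdx hxy) hdy, rfl]
  · obtain ⟨r, ⟨hr, hxr⟩, hr_uniq⟩ := huniq x hx
    refine ⟨r, ⟨.inl ⟨hr, fun hdr => hdx (hstrans d r x hdr (hssym x r hxr))⟩, hxr⟩, ?_⟩
    rintro y ⟨⟨hy, -⟩ | rfl, hxy⟩
    exacts [hr_uniq y ⟨hy, hxy⟩, absurd (hssym x y hxy) hdx]

namespace IsForwardTarget

lemma isBackStepTarget (hH : H.IsNavHist) (hf : H.IsForwardTarget d) (ha : a ∈ H.A)
    (had : H.before a d) : H.IsBackStepTarget d a := by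
  refine ⟨had, fun x hxd => ?_⟩
  by_cases hxa : x = a
  · rw [hxa]
    exact hH.le_refl (hH.mem_D_of_sim had.1).1
  refine (hH.le_total (hH.mem_D_of_sim hxd.1).1 (hH.mem_D_of_sim had.1).1).resolve_right
    fun hax => hH.not_lt_of_le (hf.2 x ⟨a, ha, ?_⟩) hxd.2
  exact ⟨hH.sim_trans had.1 (hH.sim_symm hxd.1), hax, Ne.symm hxa⟩

lemma JSF_traverseTo (hH : H.IsNavHist) (hf : H.IsForwardTarget d) :
    (H.traverseTo d).JSF = H.JSF \ {d} := by
  obtain ⟨a, ha, had⟩ := hf.1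
  ext e
  constructor
  · rintro ⟨b, ⟨hb, hdb⟩ | rfl, hbe⟩
    · exact ⟨⟨b, hb, hbe⟩, fun hed => hdb (hH.sim_symm (hed ▸ hbe.1))⟩
    · exact ⟨⟨a, ha, hH.before_trans had hbe⟩, fun hed => hbe.2.2 hed.symm⟩
  · rintro ⟨⟨b, hb, hbe⟩, hed⟩
    by_cases hdb : H.sim d b
    · exact ⟨d, .inr rfl, hH.sim_trans hdb hbe.1, hf.2 e ⟨b, hb, hbe⟩, Ne.symm hed⟩
    · exact ⟨b, .inl ⟨hb, hdb⟩, hbe⟩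

lemma traverseFrom_traverseTo (hH : H.IsNavHist) (hf : H.IsForwardTarget d) :
    (H.traverseTo d).TraverseFrom d H := by
  obtain ⟨a, ha, had⟩ := hf.1
  exact ⟨a, (hf.isBackStepTarget hH ha had :),
    by rw [traverseTo_traverseTo_of_sim hH (hH.sim_symm had.1), traverseTo_eq_self hH ha]⟩

end IsForwardTarget

namespace WellFormed

lemma traverseTo (hwf : H.WellFormed) (hH : H.IsNavHist) (hf : H.IsForwardTarget d) :
    (H.traverseTo d).WellFormed := by
  obtain ⟨a, ha, had⟩ := hf.1
  rintro p q r s hpq hrs (⟨hp, -⟩ | rfl) (⟨hs, -⟩ | rfl)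
  · exact hwf p q r s hpq hrs hp hs
  · exact hf.2 q ⟨p, hp, hpq⟩
  · exact hwf a q r s (hH.before_trans had hpq) hrs ha hs
  · exact hpq.2.1

lemma isBackTarget_traverseTo (hwf : H.WellFormed) (hH : H.IsNavHist)
    (hf : H.IsForwardTarget d) : (H.traverseTo d).IsBackTarget d := by
  obtain ⟨a, ha, had⟩ := hf.1
  refine ⟨.inr rfl, ⟨a, had⟩, ?_⟩
  rintro x (⟨hx, -⟩ | rfl) ⟨c, hcx⟩
  exacts [hwf a d c x had hcx ha hx, hH.le_refl (hH.mem_D_of_mem_JSF hf.1)]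

end WellFormed

namespace FirstOfJSF

variable {ds : List α}

lemma head_lt (hH : H.IsNavHist) (h : H.FirstOfJSF (d :: ds)) (he : e ∈ ds) : H.lt d e :=
  have : Trans H.lt H.lt H.lt := ⟨hH.lt_trans⟩
  List.IsChain.rel_cons h.1 he

lemma isForwardTarget_head (hH : H.IsNavHist) (h : H.FirstOfJSF (d :: ds)) :
    H.IsForwardTarget d := by
  have hd := h.2.1 d List.mem_cons_self
  refine ⟨hd, fun e he => ?_⟩
  by_cases hmem : e ∈ d :: ds
  · rcases List.mem_cons.1 hmem with rfl | he'
    exacts [hH.le_refl (hH.mem_D_of_mem_JSF hd), (h.head_lt hH he').1]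
  · exact (h.2.2 e he hmem d List.mem_cons_self).1

lemma traverseTo_head (hH : H.IsNavHist) (h : H.FirstOfJSF (d :: ds)) :
    (H.traverseTo d).FirstOfJSF ds := by
  refine ⟨h.1.tail, ?_, ?_⟩ <;> rw [(h.isForwardTarget_head hH).JSF_traverseTo hH]
  · exact fun x hx => ⟨h.2.1 x (List.mem_cons_of_mem d hx),
      fun hxd => (h.head_lt hH hx).2 (Set.mem_singleton_iff.1 hxd).symm⟩
  · rintro e ⟨he, hed⟩ hes x hx
    exact h.2.2 e he (List.not_mem_cons_of_ne_of_not_mem hed hes) x (List.mem_cons_of_mem d hx)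

end FirstOfJSF

lemma TraverseByMinus.snoc {H₀ H₁ H₂ : NavData α} {n : ℕ} {b : α}
    (h : TraverseByMinus H₀ n H₁) (hb : H₁.IsBackTarget b) (ht : H₁.TraverseFrom b H₂) :
    TraverseByMinus H₀ (n + 1) H₂ := by
  induction h with
  | zero => exact .succ hb ht (.zero _)
  | succ hb' ht' _ ih => exact .succ hb' ht' (ih hb ht)

lemma traverseByMinus_foldl_traverseTo {ds : List α} (hH : H.IsNavHist) (hwf : H.WellFormed)
    (h : H.FirstOfJSF ds) : TraverseByMinus (ds.foldl traverseTo H) ds.length H := by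
  induction ds generalizing H with
  | nil => exact .zero H
  | cons d ds ih =>
    have hf := h.isForwardTarget_head hH
    exact (ih (hH.traverseTo (hH.mem_D_of_mem_JSF hf.1)) (hwf.traverseTo hH hf)
      (h.traverseTo_head hH)).snoc (hwf.isBackTarget_traverseTo hH hf)
      (hf.traverseFrom_traverseTo hH)

lemma TraverseByPlus.traverseByMinus {H' : NavData α} {n : ℕ} (hH : H.IsNavHist)
    (hwf : H.WellFormed) (h : H.TraverseByPlus n H') : TraverseByMinus H' n H := by
  obtain ⟨ds, rfl, hds, rfl⟩ := h
  exact traverseByMinus_foldl_traverseTo hH hwf hds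

end NavData

theorem stmt13_general {α : Type} (H H' : NavData α) (hH : H.IsNavHist)
    (hwf : H.WellFormed) (δ : ℕ)
    (h : H.TraverseByPlus δ H') : NavData.TraverseByMinus H' δ H :=
  h.traverseByMinus hH hwf

theorem stmt13 {α : Type} (H H' : NavData α) (hH : H.IsNavHist)
    (hwf : H.WellFormed) (δ : ℕ) (hδ : 1 ≤ δ)
    (h : H.TraverseByPlus δ H') : NavData.TraverseByMinus H' δ H :=
  stmt13_general H H' hH hwf δ h
end

section
/- There exists a navigation history H (satisfying all the navigation history axioms) and histories H', H'' such that, under the UNPATCHED definitions (where 'traversing by δ' only changes the active document in a single session, traversing directly to the δ-th entry of the joint session future), H traverses by +1 to H', and H' traverses by +1 to H'', but H does NOT traverse by +2 to H''. (For instance, the 5-document example of Counterexample 1 from the paper works.) -/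
/-! Traversing to `d` only touches the active document of `d`'s session, so an unpatched traversal
by `+δ`, being a single traversal, deactivates at most one active document. In the five-document
history the joint session future is `3 < 4`, with `3` in the session of `1` and `4` in that of `2`.
Two traversals by `+1` go to `3` and then to `4`, deactivating both `1` and `2`, which no single
traversal can do. -/

namespace NavData

variable {α : Type} {H H' : NavData α}

lemma IsNavHist.sim_symm_s14 (hH : H.IsNavHist) {d e : α} (h : H.sim d e) : H.sim e d :=
  hH.2.2.2.2.2.2.2.2.2.2.2.1 d e h

lemma IsNavHist.sim_trans_s14 (hH : H.IsNavHist) {d e f : α} (hde : H.sim d e) (hef : H.sim e f) :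
    H.sim d f :=
  hH.2.2.2.2.2.2.2.2.2.2.2.2.1 d e f hde hef

lemma mem_traverseTo_A_of_not_sim {d a : α} (ha : a ∈ H.A) (hda : ¬ H.sim d a) :
    a ∈ (H.traverseTo d).A :=
  Or.inl ⟨ha, hda⟩

lemma IsNavHist.mem_traverseTo_A_or (hH : H.IsNavHist) {a b : α} (ha : a ∈ H.A) (hb : b ∈ H.A)
    (hab : ¬ H.sim a b) (d : α) : a ∈ (H.traverseTo d).A ∨ b ∈ (H.traverseTo d).A := by
  by_cases hda : H.sim d a
  · refine Or.inr (mem_traverseTo_A_of_not_sim hb fun hdb => hab ?_)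
    exact hH.sim_trans_s14 (hH.sim_symm_s14 hda) hdb
  · exact Or.inl (mem_traverseTo_A_of_not_sim ha hda)

lemma UnpatchedTraverseByPlus.exists_eq_traverseTo {n : ℕ} (h : H.UnpatchedTraverseByPlus n H') :
    ∃ d, H' = H.traverseTo d := by
  obtain ⟨-, -, -, d, -, rfl⟩ := h
  exact ⟨d, rfl⟩

lemma IsNavHist.not_unpatchedTraverseByPlus (hH : H.IsNavHist) {a b : α} (ha : a ∈ H.A)
    (hb : b ∈ H.A) (hab : ¬ H.sim a b) (ha' : a ∉ H'.A) (hb' : b ∉ H'.A) (n : ℕ) :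
    ¬ H.UnpatchedTraverseByPlus n H' := by
  intro h
  obtain ⟨d, rfl⟩ := h.exists_eq_traverseTo
  exact (hH.mem_traverseTo_A_or ha hb hab d).elim ha' hb'

lemma unpatchedTraverseByPlus_one {d : α} (hd : d ∈ H.JSF)
    (hmin : ∀ e ∈ H.JSF, e ≠ d → H.lt d e) : H.UnpatchedTraverseByPlus 1 (H.traverseTo d) := by
  refine ⟨[d], ⟨List.isChain_singleton d, ?_, ?_⟩, rfl, d, rfl, rfl⟩
  · simpa using hd
  · simpa using hmin

/-- Sessions are encoded by parity, with `0` alone in its session. -/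
def fiveDocHistory : NavData ℕ where
  D := {d | d ≤ 4}
  A := {d | d ≤ 2}
  child d e := d = 0 ∧ 1 ≤ e ∧ e ≤ 4
  le d e := d ≤ e ∧ e ≤ 4
  sim d e := d ≤ 4 ∧ e ≤ 4 ∧ d % 2 = e % 2 ∧ (d = 0 ↔ e = 0)

lemma fiveDocHistory_isNavHist : fiveDocHistory.IsNavHist := by
  have hacyclic : ∀ d, ¬ Relation.TransGen fiveDocHistory.child d d := fun d hd =>
    lt_irrefl d (Relation.transGen_minimal (r' := (· < ·))
      (fun a b (h : a = 0 ∧ 1 ≤ b ∧ b ≤ 4) => by omega) d d hd)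
  refine ⟨(Set.finite_Iic 4).subset fun d hd => hd, ?_, ?_, hacyclic, ?_, ?_, ?_, ?_, ?_, ?_, ?_, ?_,
    ?_, ?_, fun d hd => ⟨d - 2 * (d / 3), ?_, ?_⟩, ?_, ?_⟩ -- active representative: `3 ↦ 1`, `4 ↦ 2`
  all_goals
    intros
    simp only [fiveDocHistory, Set.mem_ofPred_eq, Set.subset_def, and_true] at *
    omega

lemma fiveDocHistory_JSF : fiveDocHistory.JSF = {3, 4} := by
  ext e
  simp only [JSF, before, lt, fiveDocHistory, Set.mem_ofPred_eq, Set.mem_insert_iff,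
    Set.mem_singleton_iff]
  constructor
  · rintro ⟨d, hd, hde⟩
    omega
  · rintro (rfl | rfl)
    exacts [⟨1, by omega⟩, ⟨2, by omega⟩]

lemma fiveDocHistory_traverseTo_three_JSF : (fiveDocHistory.traverseTo 3).JSF = {4} := by
  ext e
  simp only [JSF, before, lt, traverseTo, fiveDocHistory, Set.mem_ofPred_eq,
    Set.mem_singleton_iff]
  constructor
  · rintro ⟨d, hd, hde⟩
    omega
  · rintro rfl
    exact ⟨2, by omega⟩

end NavData

theorem stmt14 : ∃ H H' H'' : NavData ℕ, H.IsNavHist ∧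
    H.UnpatchedTraverseByPlus 1 H' ∧ H'.UnpatchedTraverseByPlus 1 H'' ∧
    ¬ H.UnpatchedTraverseByPlus 2 H'' := by
  open NavData in
  refine ⟨fiveDocHistory, fiveDocHistory.traverseTo 3, (fiveDocHistory.traverseTo 3).traverseTo 4,
    fiveDocHistory_isNavHist, unpatchedTraverseByPlus_one ?_ ?_, unpatchedTraverseByPlus_one ?_ ?_,
    fiveDocHistory_isNavHist.not_unpatchedTraverseByPlus (a := 1) (b := 2) ?_ ?_ ?_ ?_ ?_ 2⟩
  · simp [fiveDocHistory_JSF]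
  · simp only [fiveDocHistory_JSF, Set.mem_insert_iff, Set.mem_singleton_iff]
    rintro e (rfl | rfl) hne
    exacts [absurd rfl hne, ⟨⟨by decide, by decide⟩, by decide⟩]
  · simp [fiveDocHistory_traverseTo_three_JSF]
  · simp [fiveDocHistory_traverseTo_three_JSF]
  all_goals simp [traverseTo, fiveDocHistory]
end
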